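/- arXiv:1909.02535 — 2 statements merged into one kernel-verified Lean document; each statement's English description precedes it below -/
import Mathlib

section
/- The Gaussian weighted length of the torus curve rescaled by s = (−t)^{−1/2} converges as t → −∞: lim_{t→−∞} (4π)^{−1/2} ∫₀^{2π} (−t)^{−1/2}·|∂_θγ(θ,t)|·exp(−|γ(θ,t)|²/(−4t)) dθ = k_m·√(2π/e). -/
/-!
Each pair of coordinates of `γ(·, t)` traces a circle of radius `r(t)^{k_j²}`, so
`|γ|² = ∑ r^{2k_j²} = -2t` and the Gaussian factor is the constant `e^{-1/2}`, while
`|∂_θ γ|² = ∑ k_j² r^{2k_j²}` is constant in `θ` as well. The weighted length is therefore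
`√(π/e · ∑ 2k_j² ρ^{2k_j²} / ∑ ρ^{2k_j²})` with `ρ = r(t)`, and `ρ → ∞` as `t → -∞`; this average
of the exponents `2k_j²` with weights `ρ^{2k_j²}` concentrates on the largest one, `2k_m²`.
-/

open Filter Real Topology

section WeightedAverage

variable {ι : Type*} [Fintype ι]

theorem tendsto_atTop_of_tendsto_sum_pow_atTop {α : Type*} {l : Filter α} {f : α → ℝ}
    (n : ι → ℕ) (hf : ∀ᶠ x in l, 0 ≤ f x) (h : Tendsto (fun x => ∑ i, f x ^ n i) l atTop) :
    Tendsto f l atTop := by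
  rw [tendsto_atTop]
  intro M
  filter_upwards [hf, h.eventually_gt_atTop (∑ i, M ^ n i)] with x hx₀ hxM
  by_contra! hlt
  have : ∑ i, f x ^ n i ≤ ∑ i, M ^ n i :=
    Finset.sum_le_sum fun i _ => pow_le_pow_left₀ hx₀ hlt.le (n i)
  linarith

/-- For `u > 0` every `u ^ n i / u ^ n i₀` is `(u⁻¹) ^ (n i₀ - n i)`, which tends to `1` if
`n i = n i₀` and to `0` otherwise. -/
theorem tendsto_sum_mul_pow_div_sum_pow (n : ι → ℕ) (c : ℕ → ℝ) {i₀ : ι}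
    (h : ∀ i, n i ≤ n i₀) :
    Tendsto (fun u : ℝ => (∑ i, c (n i) * u ^ n i) / ∑ i, u ^ n i) atTop (𝓝 (c (n i₀))) := by
  set w : ι → ℝ := fun i => 0 ^ (n i₀ - n i)
  have hw : ∀ i, Tendsto (fun u : ℝ => (u⁻¹) ^ (n i₀ - n i)) atTop (𝓝 (w i)) :=
    fun i => tendsto_inv_atTop_zero.pow _
  have hw_pos : 0 < ∑ i, w i :=
    Finset.sum_pos' (fun i _ => pow_nonneg le_rfl _) ⟨i₀, Finset.mem_univ _, by simp [w]⟩
  have hcw : ∑ i, c (n i) * w i = c (n i₀) * ∑ i, w i := by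
    rw [Finset.mul_sum]
    refine Finset.sum_congr rfl fun i _ => ?_
    by_cases hi : n i = n i₀
    · rw [hi]
    · have : n i₀ - n i ≠ 0 := by have := h i; omega
      simp [w, zero_pow this]
  have hlim := (tendsto_finsetSum Finset.univ fun i _ => (hw i).const_mul (c (n i))).div
    (tendsto_finsetSum Finset.univ fun i _ => hw i) hw_pos.ne'
  rw [hcw, mul_div_cancel_right₀ _ hw_pos.ne'] at hlim
  refine hlim.congr' ?_
  filter_upwards [eventually_gt_atTop 0] with u hu
  have hpow : ∀ i, (u⁻¹) ^ (n i₀ - n i) = u ^ n i / u ^ n i₀ := fun i => by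
    rw [inv_pow, pow_sub₀ _ hu.ne' (h i), mul_inv, inv_inv, div_eq_mul_inv, mul_comm]
  rw [Pi.div_apply]
  simp only [hpow, mul_div_assoc', ← Finset.sum_div]
  exact div_div_div_cancel_right₀ (by positivity) _ _

end WeightedAverage

section TorusCurve

variable {ι : Type*} [Fintype ι]

theorem EuclideanSpace.norm_sq_prod_fin_two (x : EuclideanSpace ℝ (ι × Fin 2)) :
    ‖x‖ ^ 2 = ∑ j, (x (j, 0) ^ 2 + x (j, 1) ^ 2) := by
  rw [EuclideanSpace.real_norm_sq_eq, Fintype.sum_prod_type]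
  simp only [Fin.sum_univ_two]

noncomputable def torusCurve (a ω : ι → ℝ) (θ : ℝ) : EuclideanSpace ℝ (ι × Fin 2) :=
  WithLp.toLp 2 fun p => a p.1 * ![cos (ω p.1 * θ), sin (ω p.1 * θ)] p.2

theorem norm_sq_torusCurve (a ω : ι → ℝ) (θ : ℝ) : ‖torusCurve a ω θ‖ ^ 2 = ∑ j, a j ^ 2 := by
  rw [EuclideanSpace.norm_sq_prod_fin_two]
  refine Finset.sum_congr rfl fun j _ => ?_
  simp only [torusCurve, Matrix.cons_val_zero, Matrix.cons_val_one]
  linear_combination a j ^ 2 * cos_sq_add_sin_sq (ω j * θ)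

theorem hasDerivAt_torusCurve (a ω : ι → ℝ) (θ : ℝ) :
    HasDerivAt (torusCurve a ω) (WithLp.toLp 2 fun p =>
      a p.1 * ω p.1 * ![-sin (ω p.1 * θ), cos (ω p.1 * θ)] p.2) θ := by
  have hcoord : HasDerivAt
      (fun θ (p : ι × Fin 2) => a p.1 * ![cos (ω p.1 * θ), sin (ω p.1 * θ)] p.2)
      (fun p => a p.1 * ω p.1 * ![-sin (ω p.1 * θ), cos (ω p.1 * θ)] p.2) θ := by
    refine hasDerivAt_pi.2 (Prod.forall.2 fun j => ?_)
    have hφ : HasDerivAt (fun θ => ω j * θ) (ω j) θ := by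
      simpa using (hasDerivAt_id θ).const_mul (ω j)
    refine Fin.forall_fin_two.2 ⟨?_, ?_⟩
    · exact (hφ.cos.const_mul (a j)).congr_deriv (by simp only [Matrix.cons_val_zero]; ring)
    · exact (hφ.sin.const_mul (a j)).congr_deriv
        (by simp only [Matrix.cons_val_one, Matrix.cons_val_fin_one]; ring)
  exact (PiLp.hasFDerivAt_toLp 2 _).comp_hasDerivAt θ hcoord

theorem norm_deriv_torusCurve (a ω : ι → ℝ) (θ : ℝ) :
    ‖deriv (torusCurve a ω) θ‖ = √(∑ j, (a j * ω j) ^ 2) := by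
  rw [(hasDerivAt_torusCurve a ω θ).deriv, ← sqrt_sq (norm_nonneg _),
    EuclideanSpace.norm_sq_prod_fin_two]
  congr 1
  refine Finset.sum_congr rfl fun j _ => ?_
  simp only [Matrix.cons_val_zero, Matrix.cons_val_one]
  linear_combination (a j * ω j) ^ 2 * sin_sq_add_cos_sq (ω j * θ)

theorem gaussian_length_torusCurve (a ω : ι → ℝ) {t : ℝ} (ht : t < 0)
    (ha : ∑ j, a j ^ 2 = -2 * t) :
    (√(4 * π))⁻¹ * ∫ θ in (0:ℝ)..2 * π,
        (√(-t))⁻¹ * ‖deriv (torusCurve a ω) θ‖ * exp (-‖torusCurve a ω θ‖ ^ 2 / (-4 * t))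
      = √(π / exp 1 * (2 * (∑ j, (a j * ω j) ^ 2) / ∑ j, a j ^ 2)) := by
  have ht₀ : 0 < -t := neg_pos.2 ht
  have hexp : -(-2 * t) / (-4 * t) = -1 / 2 := by field_simp [ht.ne]; ring
  have hexp_sq : exp (-1 / 2) ^ 2 = (exp 1)⁻¹ := by rw [← exp_nat_mul, ← exp_neg]; norm_num
  set V := ∑ j, (a j * ω j) ^ 2
  have hV : 0 ≤ V := by positivity
  have hintegrand : ∀ θ, (√(-t))⁻¹ * ‖deriv (torusCurve a ω) θ‖ *
      exp (-‖torusCurve a ω θ‖ ^ 2 / (-4 * t)) = (√(-t))⁻¹ * √V * exp (-1 / 2) := fun θ => by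
    rw [norm_deriv_torusCurve, norm_sq_torusCurve, ha, hexp]
  simp only [hintegrand, intervalIntegral.integral_const, smul_eq_mul, sub_zero]
  rw [eq_comm, sqrt_eq_iff_eq_sq (by positivity) (by positivity), ha]
  simp only [mul_pow, inv_pow, hexp_sq, sq_sqrt (by positivity : (0:ℝ) ≤ 4 * π), sq_sqrt ht₀.le,
    sq_sqrt hV]
  field_simp
  ring

end TorusCurve

theorem torus_curve_gaussian_length_limit_general (m : ℕ) (k : Fin m → ℕ)
    (hkmono : StrictMono k)
    (r : ℝ → ℝ)
    (hr : ∀ t < (0:ℝ), 0 < r t ∧ ∑ j : Fin m, (r t) ^ (2 * (k j) ^ 2) = -2 * t)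
    (γ : ℝ → ℝ → EuclideanSpace ℝ (Fin m × Fin 2))
    (hγ : ∀ (θ t : ℝ) (j : Fin m),
      γ θ t (j, 0) = (r t) ^ ((k j) ^ 2) * Real.cos (k j * θ) ∧
      γ θ t (j, 1) = (r t) ^ ((k j) ^ 2) * Real.sin (k j * θ))
    (jmax : Fin m) (hjmax : (jmax : ℕ) = m - 1) :
    Filter.Tendsto
      (fun t => (Real.sqrt (4 * Real.pi))⁻¹ *
        ∫ θ in (0:ℝ)..(2 * Real.pi),
          (Real.sqrt (-t))⁻¹ * ‖deriv (fun θ' => γ θ' t) θ‖ *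
            Real.exp (-‖γ θ t‖ ^ 2 / (-4 * t)))
      Filter.atBot
      (nhds ((k jmax : ℝ) * Real.sqrt (2 * Real.pi / Real.exp 1))) := by
  have hmax : ∀ j, 2 * k j ^ 2 ≤ 2 * k jmax ^ 2 := fun j => by
    have := hkmono.monotone (show j ≤ jmax from Fin.le_def.2 (by omega))
    gcongr
  have hr_top : Tendsto r atBot atTop := by
    refine tendsto_atTop_of_tendsto_sum_pow_atTop (fun j => 2 * k j ^ 2) ?_ ?_
    · filter_upwards [eventually_lt_atBot 0] with t ht using (hr t ht).1.le
    · refine (tendsto_neg_atBot_atTop.const_mul_atTop two_pos).congr' ?_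
      filter_upwards [eventually_lt_atBot 0] with t ht
      rw [(hr t ht).2]; ring
  have hlim := (continuous_sqrt.tendsto _).comp <|
    ((tendsto_sum_mul_pow_div_sum_pow (fun j => 2 * k j ^ 2) Nat.cast hmax).comp hr_top).const_mul
      (π / exp 1)
  have hconst : √(π / exp 1 * ((2 * k jmax ^ 2 : ℕ) : ℝ)) = k jmax * √(2 * π / exp 1) := by
    rw [show π / exp 1 * ((2 * k jmax ^ 2 : ℕ) : ℝ) = (k jmax : ℝ) ^ 2 * (2 * π / exp 1) by
      push_cast; ring, sqrt_mul (by positivity), sqrt_sq (by positivity)]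
  rw [hconst] at hlim
  refine hlim.congr' ?_
  filter_upwards [eventually_lt_atBot 0] with t ht
  have hγt : ∀ θ, γ θ t = torusCurve (fun j => r t ^ k j ^ 2) (fun j => k j) θ := fun θ => by
    ext ⟨j, i⟩
    fin_cases i
    exacts [(hγ θ t j).1, (hγ θ t j).2]
  simp only [hγt]
  rw [gaussian_length_torusCurve _ _ ht (by simpa only [← pow_mul, mul_comm] using (hr t ht).2)]
  simp only [Function.comp_apply, Finset.mul_sum, mul_pow, ← pow_mul]
  congr 3 <;> refine Finset.sum_congr rfl fun j _ => ?_ <;> push_cast <;> ring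

/-- As `t → -∞`, the Gaussian weighted length of the torus curve rescaled by
`s = (-t)^{-1/2}` converges to `k_m √(2π/e)`, i.e.
`lim_{t→-∞} (4π)^{-1/2} ∫₀^{2π} (-t)^{-1/2} |∂_θ γ(θ,t)| exp(-|γ(θ,t)|²/(-4t)) dθ
  = k_m √(2π/e)`.  (Here `exp(-|γ|²/(-4t)) = exp(|γ|²/(4t))` since `t < 0`, and
`jmax` is the index of `k_m`.) -/
theorem torus_curve_gaussian_length_limit (m : ℕ) (hm : 1 ≤ m) (k : Fin m → ℕ)
    (hkpos : ∀ j, 0 < k j) (hkmono : StrictMono k)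
    (r : ℝ → ℝ)
    (hr : ∀ t < (0:ℝ), 0 < r t ∧ ∑ j : Fin m, (r t) ^ (2 * (k j) ^ 2) = -2 * t)
    (γ : ℝ → ℝ → EuclideanSpace ℝ (Fin m × Fin 2))
    (hγ : ∀ (θ t : ℝ) (j : Fin m),
      γ θ t (j, 0) = (r t) ^ ((k j) ^ 2) * Real.cos (k j * θ) ∧
      γ θ t (j, 1) = (r t) ^ ((k j) ^ 2) * Real.sin (k j * θ))
    (jmax : Fin m) (hjmax : (jmax : ℕ) = m - 1) :
    Filter.Tendsto
      (fun t => (Real.sqrt (4 * Real.pi))⁻¹ *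
        ∫ θ in (0:ℝ)..(2 * Real.pi),
          (Real.sqrt (-t))⁻¹ * ‖deriv (fun θ' => γ θ' t) θ‖ *
            Real.exp (-‖γ θ t‖ ^ 2 / (-4 * t)))
      Filter.atBot
      (nhds ((k jmax : ℝ) * Real.sqrt (2 * Real.pi / Real.exp 1))) :=
  torus_curve_gaussian_length_limit_general m k hkmono r hr γ hγ jmax hjmax
end

section
/- Let n ≥ 1, K > 0, and let u : ℝⁿ × (−∞,0) → ℝ be twice continuously differentiable, ℤⁿ-periodic in space, and satisfy the pointwise inequality (∂_t u − Δu)² ≤ K·(u² + |∇u|²). Then for every α ≥ K + 2 and all T₁ < T₂ < 0: ∫_{T₁}^{T₂} ∫_{[0,1]ⁿ} (u² + |∇u|²)·e^{−αt} dx dt ≤ ∫_{[0,1]ⁿ} u(x,T₁)²·e^{−αT₁} dx. -/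
/-- The `i`-th spatial partial derivative of `u : ℝⁿ × ℝ → ℝ`. -/
noncomputable def spatialPDeriv {n : ℕ} (i : Fin n) (u : (Fin n → ℝ) → ℝ → ℝ) :
    (Fin n → ℝ) → ℝ → ℝ :=
  fun x t => deriv (fun s => u (Function.update x i s) t) (x i)

/-- The spatial Laplacian `Δu = ∑ᵢ ∂²u/∂xᵢ²` of `u : ℝⁿ × ℝ → ℝ`. -/
noncomputable def spatialLaplacian {n : ℕ} (u : (Fin n → ℝ) → ℝ → ℝ) :
    (Fin n → ℝ) → ℝ → ℝ :=
  fun x t => ∑ i : Fin n, spatialPDeriv i (spatialPDeriv i u) x t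

/-- The squared norm `|∇u|² = ∑ᵢ (∂u/∂xᵢ)²` of the spatial gradient. -/
noncomputable def spatialGradSq {n : ℕ} (u : (Fin n → ℝ) → ℝ → ℝ) :
    (Fin n → ℝ) → ℝ → ℝ :=
  fun x t => ∑ i : Fin n, (spatialPDeriv i u x t) ^ 2

/-- The time derivative `∂ₜu` of `u : ℝⁿ × ℝ → ℝ`. -/
noncomputable def timeDeriv {n : ℕ} (u : (Fin n → ℝ) → ℝ → ℝ) :
    (Fin n → ℝ) → ℝ → ℝ :=
  fun x t => deriv (fun s => u x s) t

/-!
Green's identity on the torus, `∫ (|∇u|² + u Δu) = 0` (the periodic field `u ∇u` has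
divergence `|∇u|² + u Δu`), and the absorption `2 u f ≤ K u² + f² / K ≤ (K + 1) u² + |∇u|²`
for `f = ∂ₜu - Δu` bound `∫ (u² + |∇u|²) e^{-αt}` at each time by
`-∂ₜ ∫ u² e^{-αt} = ∫ (α u² - 2 u ∂ₜu) e^{-αt}` once `α ≥ K + 2`. Integrating over
`[T₁, T₂]` (Fubini, then the fundamental theorem of calculus in `t` for each `x`) and dropping
the nonnegative term at `T₂` gives the estimate.
-/

open MeasureTheory Set Function

theorem two_mul_le_of_sq_le {K α a f g : ℝ} (hg : 0 ≤ g) (hf : f ^ 2 ≤ K * (a ^ 2 + g))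
    (hα : K + 2 ≤ α) : 2 * a * f ≤ (α - 1) * a ^ 2 + g := by
  rcases lt_or_ge 0 K with hK | hK
  · nlinarith [sq_nonneg (K * a - f), mul_nonneg (sub_nonneg.2 hα) (sq_nonneg a)]
  · have hKg : K * (a ^ 2 + g) ≤ 0 := mul_nonpos_of_nonpos_of_nonneg hK (by positivity)
    obtain rfl : f = 0 :=
      (pow_eq_zero_iff two_ne_zero).1 (le_antisymm (hf.trans hKg) (sq_nonneg f))
    nlinarith [mul_nonneg (sub_nonneg.2 hα) (sq_nonneg a)]

theorem integral_sq_mul_exp_eq_sub_of_hasDerivAt {f f' : ℝ → ℝ} {a b : ℝ} (α : ℝ)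
    (hab : a ≤ b) (hf : ∀ t ∈ Icc a b, HasDerivAt f (f' t) t) (hf' : ContinuousOn f' (Icc a b)) :
    ∫ t in a..b, (α * f t ^ 2 - 2 * f t * f' t) * Real.exp (-α * t)
      = f a ^ 2 * Real.exp (-α * a) - f b ^ 2 * Real.exp (-α * b) := by
  have hderiv : ∀ t ∈ uIcc a b, HasDerivAt (fun s => -(f s ^ 2 * Real.exp (-α * s)))
      ((α * f t ^ 2 - 2 * f t * f' t) * Real.exp (-α * t)) t := by
    intro t ht
    rw [uIcc_of_le hab] at ht
    refine ((((hf t ht).fun_pow 2).fun_mul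
      ((hasDerivAt_id t).const_mul (-α)).exp).fun_neg).congr_deriv ?_
    simp only [id, Nat.cast_ofNat, mul_one]
    ring
  have hcont : ContinuousOn f (Icc a b) := fun t ht => (hf t ht).continuousAt.continuousWithinAt
  rw [intervalIntegral.integral_eq_sub_of_hasDerivAt hderiv]
  · ring
  · apply ContinuousOn.intervalIntegrable
    rw [uIcc_of_le hab]
    fun_prop

section ParametricIntegral

variable {X : Type*} [TopologicalSpace X] [T2Space X] [MeasurableSpace X] [BorelSpace X]
  {μ : Measure X} [IsFiniteMeasureOnCompacts μ] [SFinite μ] {s : Set X} {a b : ℝ}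
  {f : X → ℝ → ℝ}

theorem ContinuousOn.integrable_restrict_prod_Icc (hs : IsCompact s)
    (hf : ContinuousOn (uncurry f) (s ×ˢ Icc a b)) :
    Integrable (uncurry f) ((μ.restrict s).prod (volume.restrict (Icc a b))) := by
  rw [Measure.prod_restrict]
  exact hf.integrableOn_compact (hs.prod isCompact_Icc)

theorem ContinuousOn.intervalIntegrable_setIntegral (hs : IsCompact s) (hab : a ≤ b)
    (hf : ContinuousOn (uncurry f) (s ×ˢ Icc a b)) :
    IntervalIntegrable (fun t => ∫ x in s, f x t ∂μ) volume a b :=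
  (intervalIntegrable_iff_integrableOn_Icc_of_le hab).2
    (hf.integrable_restrict_prod_Icc hs).integral_prod_right

theorem ContinuousOn.intervalIntegral_setIntegral_comm (hs : IsCompact s) (hab : a ≤ b)
    (hf : ContinuousOn (uncurry f) (s ×ˢ Icc a b)) :
    ∫ t in a..b, ∫ x in s, f x t ∂μ = ∫ x in s, (∫ t in a..b, f x t) ∂μ := by
  simp only [intervalIntegral.integral_of_le hab, Measure.restrict_congr_set Ioc_ae_eq_Icc]
  exact (integral_integral_swap (hf.integrable_restrict_prod_Icc hs)).symm

end ParametricIntegral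

theorem integral_divergence_eq_zero_of_periodic {n : ℕ} (F : Fin n → (Fin n → ℝ) → ℝ)
    (hF : ∀ i, ContDiff ℝ 1 (F i)) (hper : ∀ i x, F i (x + Pi.single i 1) = F i x) :
    ∫ x in Icc (0 : Fin n → ℝ) 1, ∑ i, fderiv ℝ (F i) x (Pi.single i 1) = 0 := by
  cases n with
  | zero => simp
  | succ m =>
    have hdiff : ∀ i, Differentiable ℝ (F i) := fun i => (hF i).differentiable one_ne_zero
    rw [integral_divergence_of_hasFDerivAt_off_countable' 0 1 (fun _ => zero_le_one) F
      (fun i => fderiv ℝ (F i)) ∅ countable_empty (fun i => (hF i).continuous.continuousOn)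
      (fun x _ i => (hdiff i x).hasFDerivAt) ?_]
    · refine Finset.sum_eq_zero fun i _ => sub_eq_zero.2 (setIntegral_congr_fun
        measurableSet_Icc fun y _ => ?_)
      have hshift : i.insertNth (α := fun _ => ℝ) 1 y = i.insertNth 0 y + Pi.single i 1 := by
        rw [← sub_eq_iff_eq_add', Fin.insertNth_sub_same, sub_zero]
      simpa [hshift] using hper i _
    · exact (continuous_finsetSum _ fun i _ =>
        ((hF i).continuous_fderiv one_ne_zero).clm_apply continuous_const).integrableOn_Icc

theorem add_single_eq_of_forall_int_shift {n : ℕ} {f : (Fin n → ℝ) → ℝ}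
    (hf : ∀ x (z : Fin n → ℤ), f (x + fun i => (z i : ℝ)) = f x) (x : Fin n → ℝ)
    (i : Fin n) : f (x + Pi.single i 1) = f x := by
  have hz : (fun j => (((Pi.single i 1 : Fin n → ℤ) j : ℤ) : ℝ)) = Pi.single i 1 := by
    ext j
    simp [Pi.single_apply]
  simpa [hz] using hf x (Pi.single i 1)

theorem deriv_comp_update_eq_fderiv {ι : Type*} [Fintype ι] [DecidableEq ι]
    {f : (ι → ℝ) → ℝ} {x : ι → ℝ} (hf : DifferentiableAt ℝ f x) (i : ι) :
    deriv (fun s => f (update x i s)) (x i) = fderiv ℝ f x (Pi.single i 1) :=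
  (hf.hasFDerivAt.comp_hasDerivAt_of_eq (x i) (hasDerivAt_update x i (x i))
    (update_eq_self i x).symm).deriv

section Slice

variable {n : ℕ} {u : (Fin n → ℝ) → ℝ → ℝ} {t : ℝ}

theorem spatialPDeriv_eq_fderiv {x : Fin n → ℝ} (hu : DifferentiableAt ℝ (fun y => u y t) x)
    (i : Fin n) : spatialPDeriv i u x t = fderiv ℝ (fun y => u y t) x (Pi.single i 1) :=
  deriv_comp_update_eq_fderiv hu i

theorem contDiff_spatialPDeriv {m : WithTop ℕ∞} (hu : ContDiff ℝ (m + 1) (fun y => u y t))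
    (i : Fin n) : ContDiff ℝ m (fun y => spatialPDeriv i u y t) := by
  simp_rw [spatialPDeriv_eq_fderiv ((hu.differentiable (by simp)) _)]
  exact (hu.fderiv_right le_rfl).clm_apply contDiff_const

theorem continuous_spatialGradSq (hu : ContDiff ℝ 1 (fun y => u y t)) :
    Continuous (fun x => spatialGradSq u x t) :=
  continuous_finsetSum _ fun i _ => (contDiff_spatialPDeriv (m := 0) hu i).continuous.pow 2

theorem continuous_spatialLaplacian (hu : ContDiff ℝ 2 (fun y => u y t)) :
    Continuous (fun x => spatialLaplacian u x t) :=
  continuous_finsetSum _ fun i _ =>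
    (contDiff_spatialPDeriv (m := 0) (contDiff_spatialPDeriv (m := 1) hu i) i).continuous

theorem spatialPDeriv_add_single {x : Fin n → ℝ} (hu : Differentiable ℝ (fun y => u y t))
    (hper : ∀ x i, u (x + Pi.single i 1) t = u x t) (i j : Fin n) :
    spatialPDeriv j u (x + Pi.single i 1) t = spatialPDeriv j u x t := by
  rw [spatialPDeriv_eq_fderiv (hu _), spatialPDeriv_eq_fderiv (hu _), ← fderiv_comp_add_right]
  simp_rw [hper _ i]

theorem integral_spatialGradSq_add_mul_spatialLaplacian (hu : ContDiff ℝ 2 (fun y => u y t))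
    (hper : ∀ x i, u (x + Pi.single i 1) t = u x t) :
    ∫ x in Icc (0 : Fin n → ℝ) 1,
      (spatialGradSq u x t + u x t * spatialLaplacian u x t) = 0 := by
  have hdiff : Differentiable ℝ (fun y => u y t) := hu.differentiable two_ne_zero
  have hgrad : ∀ i, ContDiff ℝ 1 (fun y => spatialPDeriv i u y t) :=
    contDiff_spatialPDeriv (m := 1) hu
  set F : Fin n → (Fin n → ℝ) → ℝ := fun i y => u y t * spatialPDeriv i u y t
  have hF : ∀ i, ContDiff ℝ 1 (F i) := fun i => (hu.of_le one_le_two).mul (hgrad i)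
  have hdiv : ∀ x, spatialGradSq u x t + u x t * spatialLaplacian u x t
      = ∑ i, fderiv ℝ (F i) x (Pi.single i 1) := by
    intro x
    rw [spatialGradSq, spatialLaplacian, Finset.mul_sum, ← Finset.sum_add_distrib]
    refine Finset.sum_congr rfl fun i _ => ?_
    rw [show F i = fun y => u y t * spatialPDeriv i u y t from rfl,
      fderiv_fun_mul (hdiff x) ((hgrad i).differentiable one_ne_zero x),
      spatialPDeriv_eq_fderiv (u := spatialPDeriv i u) ((hgrad i).differentiable one_ne_zero x),
      spatialPDeriv_eq_fderiv (hdiff x)]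
    simp only [add_apply, smul_apply, smul_eq_mul]
    ring
  simp_rw [hdiv]
  exact integral_divergence_eq_zero_of_periodic F hF fun i x => by
    simp only [F, hper, spatialPDeriv_add_single hdiff hper]

theorem integral_sq_add_spatialGradSq_le {K α : ℝ} (hu : ContDiff ℝ 2 (fun x => u x t))
    (hper : ∀ x i, u (x + Pi.single i 1) t = u x t)
    (hut : Continuous fun x => timeDeriv u x t)
    (hpde : ∀ x, (timeDeriv u x t - spatialLaplacian u x t) ^ 2
      ≤ K * (u x t ^ 2 + spatialGradSq u x t))
    (hα : K + 2 ≤ α) :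
    ∫ x in Icc (0 : Fin n → ℝ) 1, (u x t ^ 2 + spatialGradSq u x t)
      ≤ ∫ x in Icc (0 : Fin n → ℝ) 1, (α * u x t ^ 2 - 2 * u x t * timeDeriv u x t) := by
  have hc : Continuous fun x => u x t := hu.continuous
  have hg := continuous_spatialGradSq (hu.of_le one_le_two)
  have hl := continuous_spatialLaplacian hu
  have hpt : ∀ x, u x t ^ 2 + spatialGradSq u x t
      ≤ (α * u x t ^ 2 - 2 * u x t * timeDeriv u x t)
        + 2 * (spatialGradSq u x t + u x t * spatialLaplacian u x t) := fun x => by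
    have := two_mul_le_of_sq_le (g := spatialGradSq u x t)
      (Finset.sum_nonneg fun i _ => sq_nonneg _) (hpde x) hα
    linarith
  calc _ ≤ ∫ x in Icc (0 : Fin n → ℝ) 1, ((α * u x t ^ 2 - 2 * u x t * timeDeriv u x t)
        + 2 * (spatialGradSq u x t + u x t * spatialLaplacian u x t)) :=
      integral_mono (by fun_prop : Continuous _).integrableOn_Icc
        (by fun_prop : Continuous _).integrableOn_Icc hpt
    _ = _ := by
      rw [integral_add (by fun_prop : Continuous _).integrableOn_Icc
        (by fun_prop : Continuous _).integrableOn_Icc, integral_const_mul,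
        integral_spatialGradSq_add_mul_spatialLaplacian hu hper, mul_zero, add_zero]

end Slice

section SpaceTime

variable {n : ℕ} {u : (Fin n → ℝ) → ℝ → ℝ} {x : Fin n → ℝ} {t : ℝ}

theorem hasDerivAt_fderiv_uncurry (hu : DifferentiableAt ℝ (uncurry u) (x, t)) :
    HasDerivAt (u x) (fderiv ℝ (uncurry u) (x, t) (0, 1)) t :=
  hu.hasFDerivAt.comp_hasDerivAt t ((hasDerivAt_const t x).prodMk (hasDerivAt_id t))

theorem hasDerivAt_timeDeriv (hu : DifferentiableAt ℝ (uncurry u) (x, t)) :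
    HasDerivAt (u x) (timeDeriv u x t) t :=
  (hasDerivAt_fderiv_uncurry hu).differentiableAt.hasDerivAt

theorem timeDeriv_eq_fderiv (hu : DifferentiableAt ℝ (uncurry u) (x, t)) :
    timeDeriv u x t = fderiv ℝ (uncurry u) (x, t) (0, 1) :=
  (hasDerivAt_fderiv_uncurry hu).deriv

theorem spatialPDeriv_eq_fderiv_uncurry (hu : DifferentiableAt ℝ (uncurry u) (x, t))
    (i : Fin n) : spatialPDeriv i u x t = fderiv ℝ (uncurry u) (x, t) (Pi.single i 1, 0) :=
  (hu.hasFDerivAt.comp_hasDerivAt_of_eq (x i)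
    ((hasDerivAt_update x i (x i)).prodMk (hasDerivAt_const _ t)) (by simp)).deriv

variable {s : Set ((Fin n → ℝ) × ℝ)}

theorem ContDiffOn.continuousOn_timeDeriv (hu : ContDiffOn ℝ 1 (uncurry u) s) (hs : IsOpen s) :
    ContinuousOn (fun q => timeDeriv u q.1 q.2) s :=
  ((hu.continuousOn_fderiv_of_isOpen hs le_rfl).clm_apply continuousOn_const).congr fun q hq =>
    timeDeriv_eq_fderiv ((hu.differentiableOn one_ne_zero q hq).differentiableAt (hs.mem_nhds hq))

theorem ContDiffOn.continuousOn_spatialGradSq (hu : ContDiffOn ℝ 1 (uncurry u) s)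
    (hs : IsOpen s) : ContinuousOn (fun q => spatialGradSq u q.1 q.2) s := by
  have hpd : ∀ i : Fin n, ContinuousOn (fun q => fderiv ℝ (uncurry u) q (Pi.single i 1, 0)) s :=
    fun i => (hu.continuousOn_fderiv_of_isOpen hs le_rfl).clm_apply continuousOn_const
  refine (continuousOn_finsetSum Finset.univ fun i _ => (hpd i).pow 2).congr
    fun ⟨x, t⟩ hq => ?_
  simp only [spatialGradSq, Pi.pow_apply, spatialPDeriv_eq_fderiv_uncurry
    ((hu.differentiableOn one_ne_zero _ hq).differentiableAt (hs.mem_nhds hq))]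

theorem ContDiffOn.contDiff_slice {m : WithTop ℕ∞} {T : Set ℝ}
    (hu : ContDiffOn ℝ m (uncurry u) (univ ×ˢ T)) (ht : t ∈ T) : ContDiff ℝ m (fun x => u x t) :=
  contDiffOn_univ.1 (hu.comp (contDiff_id.prodMk contDiff_const).contDiffOn
    fun x _ => mk_mem_prod (mem_univ x) ht)

variable {T₁ T₂ : ℝ}

theorem ContDiffOn.integral_sq_add_spatialGradSq_mul_exp_le {K α : ℝ}
    (hu : ContDiffOn ℝ 2 (uncurry u) (univ ×ˢ Iio 0)) (ht : t < 0)
    (hper : ∀ x i, u (x + Pi.single i 1) t = u x t)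
    (hpde : ∀ x, (timeDeriv u x t - spatialLaplacian u x t) ^ 2
      ≤ K * (u x t ^ 2 + spatialGradSq u x t))
    (hα : K + 2 ≤ α) :
    ∫ x in Icc (0 : Fin n → ℝ) 1, (u x t ^ 2 + spatialGradSq u x t) * Real.exp (-α * t)
      ≤ ∫ x in Icc (0 : Fin n → ℝ) 1,
          (α * u x t ^ 2 - 2 * u x t * timeDeriv u x t) * Real.exp (-α * t) := by
  have hut : Continuous fun x => timeDeriv u x t :=
    ((hu.of_le one_le_two).continuousOn_timeDeriv (isOpen_univ.prod isOpen_Iio)).comp_continuous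
      (continuous_id.prodMk continuous_const) fun x => mk_mem_prod (mem_univ x) ht
  simp only [integral_mul_const]
  exact mul_le_mul_of_nonneg_right (integral_sq_add_spatialGradSq_le
    (hu.contDiff_slice ht) hper hut hpde hα) (Real.exp_pos _).le

theorem ContDiffOn.intervalIntegral_sq_mul_exp_eq_sub
    (hu : ContDiffOn ℝ 1 (uncurry u) (univ ×ˢ Iio 0)) (α : ℝ) (hT₁₂ : T₁ ≤ T₂)
    (hT₂ : T₂ < 0) (x : Fin n → ℝ) :
    ∫ t in T₁..T₂, (α * u x t ^ 2 - 2 * u x t * timeDeriv u x t) * Real.exp (-α * t)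
      = u x T₁ ^ 2 * Real.exp (-α * T₁) - u x T₂ ^ 2 * Real.exp (-α * T₂) := by
  have hS : IsOpen (univ ×ˢ Iio (0 : ℝ) : Set ((Fin n → ℝ) × ℝ)) :=
    isOpen_univ.prod isOpen_Iio
  have hmem : ∀ t ∈ Icc T₁ T₂, (x, t) ∈ univ ×ˢ Iio (0 : ℝ) :=
    fun t ht => mk_mem_prod (mem_univ x) (ht.2.trans_lt hT₂)
  exact integral_sq_mul_exp_eq_sub_of_hasDerivAt α hT₁₂
    (fun t ht => hasDerivAt_timeDeriv
      ((hu.differentiableOn one_ne_zero _ (hmem t ht)).differentiableAt (hS.mem_nhds (hmem t ht))))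
    ((hu.continuousOn_timeDeriv hS).comp (continuous_const.prodMk continuous_id).continuousOn hmem)

end SpaceTime

theorem carleman_absorbed_estimate_general (n : ℕ) (K : ℝ)
    (u : (Fin n → ℝ) → ℝ → ℝ)
    (hu : ContDiffOn ℝ 2 (fun q : (Fin n → ℝ) × ℝ => u q.1 q.2)
      (Set.univ ×ˢ Set.Iio 0))
    (hper : ∀ (x : Fin n → ℝ) (t : ℝ), t < 0 → ∀ z : Fin n → ℤ,
      u (x + fun i => (z i : ℝ)) t = u x t)
    (hpde : ∀ (x : Fin n → ℝ) (t : ℝ), t < 0 →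
      (timeDeriv u x t - spatialLaplacian u x t) ^ 2
        ≤ K * ((u x t) ^ 2 + spatialGradSq u x t))
    (α : ℝ) (hα : K + 2 ≤ α)
    (T₁ T₂ : ℝ) (hT₁₂ : T₁ < T₂) (hT₂ : T₂ < 0) :
    (∫ t in T₁..T₂, ∫ x in Set.Icc (0 : Fin n → ℝ) 1,
        ((u x t) ^ 2 + spatialGradSq u x t) * Real.exp (-α * t))
      ≤ ∫ x in Set.Icc (0 : Fin n → ℝ) 1, (u x T₁) ^ 2 * Real.exp (-α * T₁) := by
  have hS : IsOpen (univ ×ˢ Iio (0 : ℝ) : Set ((Fin n → ℝ) × ℝ)) :=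
    isOpen_univ.prod isOpen_Iio
  have hsub : Icc (0 : Fin n → ℝ) 1 ×ˢ Icc T₁ T₂ ⊆ univ ×ˢ Iio 0 :=
    prod_mono (subset_univ _) fun t ht => ht.2.trans_lt hT₂
  have hu₁ := hu.of_le one_le_two
  have hc := hu.continuousOn
  have hut := hu₁.continuousOn_timeDeriv hS
  have hgrad := hu₁.continuousOn_spatialGradSq hS
  calc _ ≤ ∫ t in T₁..T₂, ∫ x in Icc (0 : Fin n → ℝ) 1,
        (α * u x t ^ 2 - 2 * u x t * timeDeriv u x t) * Real.exp (-α * t) :=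
      intervalIntegral.integral_mono_on hT₁₂.le
        (ContinuousOn.intervalIntegrable_setIntegral isCompact_Icc hT₁₂.le
          (.mono (by fun_prop) hsub))
        (ContinuousOn.intervalIntegrable_setIntegral isCompact_Icc hT₁₂.le
          (.mono (by fun_prop) hsub))
        fun t ht => hu.integral_sq_add_spatialGradSq_mul_exp_le (ht.2.trans_lt hT₂)
          (add_single_eq_of_forall_int_shift (f := (u · t)) (hper · t (ht.2.trans_lt hT₂)))
          (hpde · t (ht.2.trans_lt hT₂)) hα
    _ = ∫ x in Icc (0 : Fin n → ℝ) 1,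
        (u x T₁ ^ 2 * Real.exp (-α * T₁) - u x T₂ ^ 2 * Real.exp (-α * T₂)) := by
      rw [ContinuousOn.intervalIntegral_setIntegral_comm isCompact_Icc hT₁₂.le
        (.mono (by fun_prop) hsub)]
      exact integral_congr_ae
        (ae_of_all _ (hu₁.intervalIntegral_sq_mul_exp_eq_sub α hT₁₂.le hT₂))
    _ ≤ _ := by
      have hc₁ := (hu.contDiff_slice (mem_Iio.2 (hT₁₂.trans hT₂))).continuous
      have hc₂ := (hu.contDiff_slice (mem_Iio.2 hT₂)).continuous
      exact integral_mono (by fun_prop : Continuous _).integrableOn_Icc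
        (by fun_prop : Continuous _).integrableOn_Icc fun x => sub_le_self _ (by positivity)

/-- Integrated Carleman estimate with nonlinear error absorbed: if `u : ℝⁿ × (-∞,0) → ℝ`
is twice continuously differentiable, `ℤⁿ`-periodic in space, and satisfies
`(∂ₜu - Δu)² ≤ K(u² + |∇u|²)` pointwise, then for every `α ≥ K + 2` and `T₁ < T₂ < 0`,
`∫_{T₁}^{T₂} ∫_{[0,1]ⁿ} (u² + |∇u|²)e^{-αt} ≤ ∫_{[0,1]ⁿ} u(·,T₁)²e^{-αT₁}`. -/
theorem carleman_absorbed_estimate (n : ℕ) (hn : 1 ≤ n) (K : ℝ) (hK : 0 < K)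
    (u : (Fin n → ℝ) → ℝ → ℝ)
    (hu : ContDiffOn ℝ 2 (fun q : (Fin n → ℝ) × ℝ => u q.1 q.2)
      (Set.univ ×ˢ Set.Iio 0))
    (hper : ∀ (x : Fin n → ℝ) (t : ℝ), t < 0 → ∀ z : Fin n → ℤ,
      u (x + fun i => (z i : ℝ)) t = u x t)
    (hpde : ∀ (x : Fin n → ℝ) (t : ℝ), t < 0 →
      (timeDeriv u x t - spatialLaplacian u x t) ^ 2
        ≤ K * ((u x t) ^ 2 + spatialGradSq u x t))
    (α : ℝ) (hα : K + 2 ≤ α)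
    (T₁ T₂ : ℝ) (hT₁₂ : T₁ < T₂) (hT₂ : T₂ < 0) :
    (∫ t in T₁..T₂, ∫ x in Set.Icc (0 : Fin n → ℝ) 1,
        ((u x t) ^ 2 + spatialGradSq u x t) * Real.exp (-α * t))
      ≤ ∫ x in Set.Icc (0 : Fin n → ℝ) 1, (u x T₁) ^ 2 * Real.exp (-α * T₁) :=
  carleman_absorbed_estimate_general n K u hu hper hpde α hα T₁ T₂ hT₁₂ hT₂
end
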